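/- Let F be a field, V an F-vector space, l ∈ ℕ, and v₀, v₁, …, v_{2l} ∈ V. Set s = ι(v₀) + ι(v₁)ι(v₂) + ι(v₃)ι(v₄) + ⋯ + ι(v_{2l−1})ι(v_{2l}) ∈ Λ(V). Then s^{l+1} = (l+1)! · ι(v₀)ι(v₁)ι(v₂)⋯ι(v_{2l}), where (l+1)! acts as a natural-number scalar. -/

import Mathlib

/-!
The summands of `s` pairwise commute (a product of two generators is even) and square to zero.
For such elements `x₁, …, xₙ` of any semiring, `(x₁ + ⋯ + xₙ) ^ n = n! • x₁ ⋯ xₙ`: expanding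
`(a + b) ^ (k + 1)` with `a ^ 2 = 0` leaves only `b ^ (k + 1) + (k + 1) • a b ^ k`, and
`(x₂ + ⋯ + xₙ) ^ n = 0` kills the first term. Finally `ι(v₀) · (ι(v₁)ι(v₂)) ⋯` regroups to
the full product.
-/

open ExteriorAlgebra

theorem Commute.add_pow_succ_of_sq_eq_zero {R : Type*} [Semiring R] {a b : R}
    (h : Commute a b) (ha : a ^ 2 = 0) (n : ℕ) :
    (a + b) ^ (n + 1) = b ^ (n + 1) + (n + 1) • (a * b ^ n) := by
  induction n with
  | zero => simp [add_comm]
  | succ n ih =>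
    have haa : a * (b ^ n * a) = 0 := by
      rw [← (h.pow_right n).eq, ← mul_assoc, ← sq, ha, zero_mul]
    rw [pow_succ, ih, add_mul, mul_add, mul_add, smul_mul_assoc, smul_mul_assoc, mul_assoc, haa,
      smul_zero, zero_add, ← (h.pow_right _).eq, mul_assoc, ← pow_succ, ← pow_succ,
      succ_nsmul _ (n + 1)]
    abel

namespace List

variable {R : Type*} [Semiring R] {L : List R}

theorem sum_pow_length_succ_eq_zero_of_sq_eq_zero (hc : L.Pairwise Commute)
    (hsq : ∀ x ∈ L, x ^ 2 = 0) : L.sum ^ (L.length + 1) = 0 := by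
  induction L with
  | nil => simp
  | cons a L ih =>
    rw [pairwise_cons] at hc
    rw [forall_mem_cons] at hsq
    rw [sum_cons, length_cons, (Commute.list_sum_right _ _ hc.1).add_pow_succ_of_sq_eq_zero hsq.1,
      pow_succ', ih hc.2 hsq.2, mul_zero, zero_add, mul_zero, smul_zero]

theorem sum_pow_length_of_sq_eq_zero (hc : L.Pairwise Commute) (hsq : ∀ x ∈ L, x ^ 2 = 0) :
    L.sum ^ L.length = L.length.factorial • L.prod := by
  induction L with
  | nil => simp
  | cons a L ih =>
    rw [pairwise_cons] at hc
    rw [forall_mem_cons] at hsq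
    rw [sum_cons, length_cons, (Commute.list_sum_right _ _ hc.1).add_pow_succ_of_sq_eq_zero hsq.1,
      sum_pow_length_succ_eq_zero_of_sq_eq_zero hc.2 hsq.2, ih hc.2 hsq.2, zero_add, mul_smul_comm,
      smul_smul, prod_cons, Nat.factorial_succ]

theorem prod_ofFn_two_mul {M : Type*} [Monoid M] {n : ℕ} (f : Fin (2 * n) → M) :
    (ofFn f).prod = (ofFn fun i : Fin n => f ⟨2 * i, by omega⟩ * f ⟨2 * i + 1, by omega⟩).prod := by
  rw [ofFn_mul', prod_flatten, map_ofFn]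
  simp [Function.comp_def, ofFn_succ]

end List

namespace ExteriorAlgebra

variable {R M : Type*} [CommRing R] [AddCommGroup M] [Module R M]

theorem ι_mul_ι_anticomm (x y : M) : ι R x * ι R y = -(ι R y * ι R x) :=
  eq_neg_of_add_eq_zero_left (ι_add_mul_swap x y)

theorem commute_ι_ι_mul_ι (x y z : M) : Commute (ι R x) (ι R y * ι R z) := by
  rw [Commute, SemiconjBy, ← mul_assoc, ι_mul_ι_anticomm x y, neg_mul, mul_assoc,
    ι_mul_ι_anticomm x z, mul_neg, neg_neg, mul_assoc]

theorem ι_mul_ι_sq (x y : M) : (ι R x * ι R y) ^ 2 = 0 := by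
  rw [sq, mul_assoc, (commute_ι_ι_mul_ι y x y).eq, ← mul_assoc, ← mul_assoc, ι_sq_zero,
    zero_mul, zero_mul]

theorem pairwise_commute_ι_cons_ι_mul_ι {n : ℕ} (x : M) (y z : Fin n → M) :
    (ι R x :: List.ofFn fun i => ι R (y i) * ι R (z i)).Pairwise Commute := by
  refine List.pairwise_cons.2 ⟨?_, List.pairwise_ofFn.2 fun i j _ => ?_⟩
  · simp only [List.mem_ofFn, forall_exists_index, forall_apply_eq_imp_iff]
    exact fun i => commute_ι_ι_mul_ι _ _ _
  · exact ((commute_ι_ι_mul_ι _ _ _).mul_left (commute_ι_ι_mul_ι _ _ _)).symm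

theorem sq_eq_zero_of_mem_ι_cons_ι_mul_ι {n : ℕ} (x : M) (y z : Fin n → M) :
    ∀ w ∈ ι R x :: List.ofFn fun i => ι R (y i) * ι R (z i), w ^ 2 = 0 := by
  simp only [List.forall_mem_cons, List.mem_ofFn, forall_exists_index, forall_apply_eq_imp_iff]
  exact ⟨by rw [sq, ι_sq_zero], fun i => ι_mul_ι_sq _ _⟩

end ExteriorAlgebra

/-- For `s = ι(v₀) + ι(v₁)ι(v₂) + ⋯ + ι(v_{2l−1})ι(v_{2l})` in Λ(V) one has
`s ^ (l+1) = (l+1)! • ι(v₀)ι(v₁)⋯ι(v_{2l})`. -/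
theorem grassmann_odd_sum_pow_succ
    (F : Type*) [Field F] (V : Type*) [AddCommGroup V] [Module F V]
    (l : ℕ) (v : Fin (2 * l + 1) → V)
    (s : ExteriorAlgebra F V)
    (hs : s = ExteriorAlgebra.ι F (v 0)
        + ∑ i : Fin l,
            ExteriorAlgebra.ι F (v ⟨2 * (i : ℕ) + 1, by omega⟩)
              * ExteriorAlgebra.ι F (v ⟨2 * (i : ℕ) + 2, by omega⟩)) :
    s ^ (l + 1)
      = (l + 1).factorial • (List.ofFn fun i => ExteriorAlgebra.ι F (v i)).prod := by
  set L := ι F (v 0) :: List.ofFn fun i : Fin l =>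
    ι F (v ⟨2 * i + 1, by omega⟩) * ι F (v ⟨2 * i + 2, by omega⟩)
  have hsum : L.sum = s := by rw [hs, List.sum_cons, List.sum_ofFn]
  have hprod : L.prod = (List.ofFn fun i => ι F (v i)).prod := by
    rw [List.prod_cons, List.ofFn_succ (n := 2 * l), List.prod_cons, List.prod_ofFn_two_mul]
    rfl
  rw [← hsum, ← hprod, show l + 1 = L.length by simp [L]]
  exact List.sum_pow_length_of_sq_eq_zero (pairwise_commute_ι_cons_ι_mul_ι _ _ _)
    (sq_eq_zero_of_mem_ι_cons_ι_mul_ι _ _ _)
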